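/- arXiv:1108.4364 — 6 statements merged into one kernel-verified Lean document; each statement's English description precedes it below -/
import Mathlib

section
/- There exists a constant c < ∞ such that for every r ≥ 1 and every x ∈ ℝ, |J(r,x) − 1/r| ≤ c·e^{−r}. -/
/-!
Write `c = π² / r`, so that `J(r, x) = (π² / (2r²)) ∑ₖ sech²(c (k + x / 2π))`. By Poisson
summation this periodisation equals `∑ₙ 𝓕[sech²(c ·)](n) e^{inx}`. The substitution `y = σ(2ct)`,
`σ` the logistic sigmoid, turns the Fourier integral of `sech²(c ·)` into a Beta integral
`B(1 - s, 1 + s)` with `s = iπξ / c`, and Euler's reflection formula evaluates it: the `n = 0`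
coefficient is `2 / c = 2r / π²`, which produces the main term `1 / r`, while the `n`-th one is
`(2r / π²) · rn / sinh (rn) = O(|n| e^{-r|n|})`.
-/

open Real

/-- The annulus function `J(r,x) = (π²/(2r²)) ∑_{k ∈ ℤ} cosh(π(x+2kπ)/(2r))⁻²`. -/
noncomputable def Jfun (r x : ℝ) : ℝ :=
  (π ^ 2 / (2 * r ^ 2)) * ∑' k : ℤ, ((Real.cosh (π * (x + 2 * (k : ℝ) * π) / (2 * r))) ^ 2)⁻¹

open MeasureTheory Filter FourierTransform Asymptotics

lemma log_sigmoid_sub_log_one_sub_sigmoid (v : ℝ) :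
    log (sigmoid v) - log (1 - sigmoid v) = v := by
  rw [← sigmoid_neg, ← sigmoid_mul_rexp_neg, log_mul (sigmoid_pos v).ne' (exp_pos _).ne', log_exp]
  ring

lemma cpow_neg_mul_one_sub_cpow_sigmoid (s : ℂ) (v : ℝ) :
    (sigmoid v : ℂ) ^ (-s) * (1 - (sigmoid v : ℂ)) ^ s = Complex.exp (-s * v) := by
  have h1 : 0 < 1 - sigmoid v := sub_pos.2 (sigmoid_lt_one v)
  rw [← Complex.ofReal_one, ← Complex.ofReal_sub,
    Complex.cpow_def_of_ne_zero (by exact_mod_cast (sigmoid_pos v).ne'),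
    Complex.cpow_def_of_ne_zero (by exact_mod_cast h1.ne'), ← Complex.exp_add,
    ← Complex.ofReal_log (sigmoid_pos v).le, ← Complex.ofReal_log h1.le]
  have hlog := congrArg ((↑) : ℝ → ℂ) (log_sigmoid_sub_log_one_sub_sigmoid v)
  push_cast at hlog
  congr 1
  linear_combination (-s) * hlog

/-- Substitute `y = σ v`, a bijection `ℝ → (0, 1)` with `dy = σ v (1 - σ v) dv`. The change of
variables formula needs no integrability, so this holds for every `s`. -/
lemma integral_cexp_neg_mul_mul_sigmoid_mul_one_sub (s : ℂ) :
    ∫ v : ℝ, Complex.exp (-s * v) * (sigmoid v * (1 - sigmoid v) : ℝ) =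
      Complex.betaIntegral (1 - s) (1 + s) := by
  have hchange := integral_image_eq_integral_abs_deriv_smul MeasurableSet.univ
    (fun v _ => (hasDerivAt_sigmoid v).hasDerivWithinAt) sigmoid_injective.injOn
    (fun y : ℝ => (y : ℂ) ^ (-s) * (1 - (y : ℂ)) ^ s)
  rw [Set.image_univ, range_sigmoid, setIntegral_univ] at hchange
  rw [Complex.betaIntegral, intervalIntegral.integral_of_le zero_le_one,
    integral_Ioc_eq_integral_Ioo, sub_sub_cancel_left, add_sub_cancel_left, hchange]
  congr 1 with v
  rw [abs_of_nonneg (mul_nonneg (sigmoid_nonneg v) (sub_nonneg.2 (sigmoid_le_one v))),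
    cpow_neg_mul_one_sub_cpow_sigmoid, Complex.real_smul, mul_comm]

lemma Complex.betaIntegral_one_sub_one_add {s : ℂ} (hs₀ : s ≠ 0) (hs : |s.re| < 1) :
    betaIntegral (1 - s) (1 + s) = π * s / sin (π * s) := by
  have hΓ := Gamma_mul_Gamma_eq_betaIntegral (s := 1 - s) (t := 1 + s)
    (by rw [sub_re, one_re]; linarith [le_abs_self s.re])
    (by rw [add_re, one_re]; linarith [neg_abs_le s.re])
  rw [sub_add_add_cancel, one_add_one_eq_two, Gamma_ofNat_eq_factorial, Nat.factorial_one,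
    Nat.cast_one, one_mul, add_comm 1 s, Gamma_add_one s hs₀, add_comm s 1] at hΓ
  rw [← hΓ, mul_left_comm, mul_comm (Gamma _), Gamma_mul_Gamma_one_sub]
  ring

lemma inv_cosh_sq_eq_sigmoid (u : ℝ) :
    (cosh u ^ 2)⁻¹ = 4 * (sigmoid (2 * u) * (1 - sigmoid (2 * u))) := by
  rw [← sigmoid_neg, sigmoid_def, sigmoid_def, cosh_eq, neg_neg]
  have h2 : exp (2 * u) = exp u ^ 2 := by rw [← exp_nat_mul]; ring_nf
  have h2' : exp (-(2 * u)) = exp (-u) ^ 2 := by rw [← exp_nat_mul]; ring_nf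
  have h1 : exp u * exp (-u) = 1 := by rw [← exp_add]; simp
  rw [h2, h2']
  have := exp_pos u
  have := exp_pos (-u)
  field_simp
  linear_combination 4 * (exp u * exp (-u) - 1) * h1

noncomputable def sechSq (c t : ℝ) : ℂ := ((cosh (c * t) ^ 2)⁻¹ : ℝ)

lemma continuous_sechSq (c : ℝ) : Continuous (sechSq c) :=
  Complex.continuous_ofReal.comp
    (((continuous_cosh.comp (continuous_const_mul c)).pow 2).inv₀ fun _ =>
      pow_ne_zero 2 (cosh_pos _).ne')

lemma abs_le_cosh (u : ℝ) : |u| ≤ cosh u := by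
  rw [← cosh_abs]
  exact (self_le_sinh_iff.2 (abs_nonneg u)).trans (sinh_lt_cosh _).le

lemma sechSq_isBigO_rpow {c : ℝ} (hc : 0 < c) :
    sechSq c =O[cocompact ℝ] fun t => |t| ^ (-2 : ℝ) := by
  refine IsBigO.of_bound (c ^ 2)⁻¹ ?_
  filter_upwards [cocompact_le_cofinite (eventually_cofinite_ne 0)] with t ht
  have hct : 0 < |c * t| := abs_pos.2 (mul_ne_zero hc.ne' ht)
  rw [sechSq, Complex.norm_real, norm_of_nonneg (by positivity), norm_of_nonneg (by positivity),
    rpow_neg (abs_nonneg t), rpow_two, sq_abs, ← mul_inv, ← mul_pow]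
  refine inv_anti₀ (by positivity) ?_
  rw [← sq_abs (c * t)]
  exact pow_le_pow_left₀ hct.le (abs_le_cosh _) 2

lemma fourier_sechSq {c : ℝ} (hc : 0 < c) (ξ : ℝ) :
    𝓕 (sechSq c) ξ = 2 / c * Complex.betaIntegral (1 - (π * ξ / c : ℝ) * Complex.I)
      (1 + (π * ξ / c : ℝ) * Complex.I) := by
  set s : ℂ := (π * ξ / c : ℝ) * Complex.I
  set h : ℝ → ℂ := fun v => 4 * (Complex.exp (-s * v) * (sigmoid v * (1 - sigmoid v) : ℝ))
  have hint : ∀ t : ℝ,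
      Complex.exp ((-2 * π * t * ξ : ℝ) * Complex.I) • sechSq c t = h (2 * c * t) := by
    intro t
    have harg : -s * ((2 * c * t : ℝ) : ℂ) = ((-2 * π * t * ξ : ℝ) : ℂ) * Complex.I := by
      have hc' : (c : ℂ) ≠ 0 := by exact_mod_cast hc.ne'
      simp only [s]
      push_cast
      field_simp
    simp only [h, sechSq, smul_eq_mul, inv_cosh_sq_eq_sigmoid, harg]
    push_cast
    ring_nf
  rw [Real.fourier_real_eq_integral_exp_smul, funext hint,
    Measure.integral_comp_mul_left (h ·) (2 * c), integral_const_mul,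
    integral_cexp_neg_mul_mul_sigmoid_mul_one_sub, abs_of_pos (by positivity), Complex.real_smul]
  push_cast
  field_simp
  ring

lemma fourier_sechSq_zero {c : ℝ} (hc : 0 < c) : 𝓕 (sechSq c) 0 = ((2 / c : ℝ) : ℂ) := by
  rw [fourier_sechSq hc]
  simp [Complex.betaIntegral_eval_one_right]

lemma fourier_sechSq_of_ne_zero {c ξ : ℝ} (hc : 0 < c) (hξ : ξ ≠ 0) :
    𝓕 (sechSq c) ξ = ((2 / c * (π ^ 2 / c * ξ / sinh (π ^ 2 / c * ξ)) : ℝ) : ℂ) := by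
  have hs₀ : ((π * ξ / c : ℝ) : ℂ) * Complex.I ≠ 0 := by
    simp [hξ, hc.ne', pi_ne_zero]
  have hπs : (π : ℂ) * (((π * ξ / c : ℝ) : ℂ) * Complex.I) =
      ((π ^ 2 / c * ξ : ℝ) : ℂ) * Complex.I := by
    push_cast
    ring
  rw [fourier_sechSq hc, Complex.betaIntegral_one_sub_one_add hs₀ (by simp), hπs,
    Complex.sin_mul_I, ← Complex.ofReal_sinh, mul_div_mul_right _ _ Complex.I_ne_zero]
  push_cast
  rfl

lemma div_sinh_eq_abs_div_sinh_abs (y : ℝ) : y / sinh y = |y| / sinh |y| := by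
  rcases abs_cases y with ⟨h, -⟩ | ⟨h, -⟩ <;> simp [h, sinh_neg, neg_div_neg_eq]

lemma div_sinh_nonneg (y : ℝ) : 0 ≤ y / sinh y := by
  rw [div_sinh_eq_abs_div_sinh_abs]
  exact div_nonneg (abs_nonneg y) (sinh_nonneg_iff.2 (abs_nonneg y))

lemma div_sinh_le (y : ℝ) : y / sinh y ≤ 2 * ((1 + |y|) * exp (-|y|)) := by
  rw [div_sinh_eq_abs_div_sinh_abs]
  rcases (abs_nonneg y).eq_or_lt with h | h
  · rw [← h]
    simp
  generalize |y| = z at h ⊢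
  have hexp : 1 + z ≤ exp z := by linarith [add_one_le_exp z]
  have hE := exp_pos (-z)
  have hmul : exp z * exp (-z) = 1 := by rw [← exp_add, add_neg_cancel, exp_zero]
  rw [div_le_iff₀ (sinh_pos_iff.2 h), sinh_eq]
  nlinarith [mul_le_mul_of_nonneg_right hexp hE.le]

lemma summable_one_add_abs_mul_exp_neg_abs {b : ℝ} (hb : 0 < b) :
    Summable fun n : ℤ => (1 + |b * n|) * exp (-|b * n|) := by
  have hnat : Summable fun n : ℕ => (1 + b * n) * exp (-(b * n)) := by
    refine ((summable_pow_mul_exp_neg_nat_mul 0 hb).add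
      ((summable_pow_mul_exp_neg_nat_mul 1 hb).mul_left b)).congr fun n => ?_
    simp only [pow_zero, pow_one, neg_mul]
    ring
  refine Summable.of_nat_of_neg (hnat.congr fun n => ?_) (hnat.congr fun n => ?_) <;>
    simp [abs_of_nonneg (by positivity : 0 ≤ b * n)]

/-- The `n = 0` term of the right-hand side vanishes (`0 / sinh 0 = 0 / 0 = 0`): it is the
coefficient `2 / c` that has been moved to the left. -/
lemma norm_tsum_sechSq_add_int_sub_le {c : ℝ} (hc : 0 < c) (y : ℝ) :
    ‖∑' k : ℤ, sechSq c (y + k) - ((2 / c : ℝ) : ℂ)‖ ≤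
      ∑' n : ℤ, 2 / c * (π ^ 2 / c * n / sinh (π ^ 2 / c * n)) := by
  set F : ℤ → ℝ := fun n => 2 / c * (π ^ 2 / c * n / sinh (π ^ 2 / c * n))
  have hF : Summable F :=
    Summable.of_nonneg_of_le (fun n => mul_nonneg (by positivity) (div_sinh_nonneg _))
      (fun n => mul_le_mul_of_nonneg_left (div_sinh_le _) (by positivity))
      (((summable_one_add_abs_mul_exp_neg_abs (b := π ^ 2 / c) (by positivity)).mul_left 2).mul_left
        (2 / c))
  have hnorm : ∀ n : ℤ, n ≠ 0 → ‖𝓕 (sechSq c) n‖ = F n := fun n hn => by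
    rw [fourier_sechSq_of_ne_zero hc (Int.cast_ne_zero.2 hn), Complex.norm_real,
      norm_of_nonneg (mul_nonneg (by positivity) (div_sinh_nonneg _))]
  have hsum : Summable fun n : ℤ => 𝓕 (sechSq c) n :=
    hF.of_norm_bounded_eventually (by
      filter_upwards [eventually_cofinite_ne 0] with n hn using (hnorm n hn).le)
  have hfourier : ∀ n : ℤ, ‖fourier n (y : UnitAddCircle)‖ = 1 := fun n => Circle.norm_coe _
  have hsum' : Summable fun n : ℤ => 𝓕 (sechSq c) n * fourier n (y : UnitAddCircle) :=
    .of_norm (hsum.norm.congr fun n => by rw [norm_mul, hfourier, mul_one])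
  rw [Real.tsum_eq_tsum_fourier_of_rpow_decay_of_summable (continuous_sechSq c) one_lt_two
    (sechSq_isBigO_rpow hc) hsum y, hsum'.tsum_eq_add_tsum_ite 0, Int.cast_zero,
    fourier_sechSq_zero hc, fourier_zero, mul_one, add_sub_cancel_left]
  refine tsum_of_norm_bounded hF.hasSum fun n => ?_
  split_ifs with hn
  · simp [F, hn]
  · rw [norm_mul, hfourier, mul_one, hnorm n hn]

lemma inv_mul_mul_div_sinh_mul_le {r : ℝ} (hr : 1 ≤ r) (n : ℤ) :
    r⁻¹ * (r * n / sinh (r * n)) ≤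
      2 * exp 1 * ((1 + |(n : ℝ)|) * exp (-|(n : ℝ)|)) * exp (-r) := by
  rcases eq_or_ne n 0 with rfl | hn
  · simp only [Int.cast_zero, mul_zero, zero_div]
    positivity
  have hn1 : 1 ≤ |(n : ℝ)| := by exact_mod_cast Int.one_le_abs hn
  have hr0 : 0 < r := by linarith
  calc r⁻¹ * (r * n / sinh (r * n))
      ≤ r⁻¹ * (2 * ((1 + |r * n|) * exp (-|r * n|))) := by gcongr; exact div_sinh_le _
    _ = 2 * ((r⁻¹ + |(n : ℝ)|) * exp (-(r * |(n : ℝ)|))) := by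
      rw [abs_mul, abs_of_pos hr0]
      field_simp
    _ ≤ 2 * ((1 + |(n : ℝ)|) * exp (1 + -|(n : ℝ)| + -r)) := by
      gcongr
      · exact inv_le_one_of_one_le₀ hr
      · nlinarith
    _ = 2 * exp 1 * ((1 + |(n : ℝ)|) * exp (-|(n : ℝ)|)) * exp (-r) := by
      rw [exp_add, exp_add]
      ring

lemma tsum_inv_mul_mul_div_sinh_mul_le {r : ℝ} (hr : 1 ≤ r) :
    ∑' n : ℤ, r⁻¹ * (r * n / sinh (r * n)) ≤
      2 * exp 1 * (∑' n : ℤ, (1 + |(n : ℝ)|) * exp (-|(n : ℝ)|)) * exp (-r) := by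
  have hsum : Summable fun n : ℤ => (1 + |(n : ℝ)|) * exp (-|(n : ℝ)|) := by
    simpa using summable_one_add_abs_mul_exp_neg_abs one_pos
  have hbound := (hsum.mul_left (2 * exp 1)).mul_right (exp (-r))
  calc ∑' n : ℤ, r⁻¹ * (r * n / sinh (r * n))
      ≤ ∑' n : ℤ, 2 * exp 1 * ((1 + |(n : ℝ)|) * exp (-|(n : ℝ)|)) * exp (-r) :=
        Summable.tsum_le_tsum (inv_mul_mul_div_sinh_mul_le hr)
          (.of_nonneg_of_le (fun n => mul_nonneg (by positivity) (div_sinh_nonneg _))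
            (inv_mul_mul_div_sinh_mul_le hr) hbound) hbound
    _ = 2 * exp 1 * (∑' n : ℤ, (1 + |(n : ℝ)|) * exp (-|(n : ℝ)|)) * exp (-r) := by
      rw [tsum_mul_right, tsum_mul_left]

lemma Jfun_eq_tsum_inv_cosh_sq (r x : ℝ) :
    Jfun r x = π ^ 2 / (2 * r ^ 2) * ∑' k : ℤ, (cosh (π ^ 2 / r * (x / (2 * π) + k)) ^ 2)⁻¹ := by
  rcases eq_or_ne r 0 with rfl | hr
  · simp [Jfun]
  have hterm : ∀ k : ℤ, π * (x + 2 * k * π) / (2 * r) = π ^ 2 / r * (x / (2 * π) + k) := by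
    intro k
    field_simp
  simp only [Jfun, hterm]

/-- There exists `c < ∞` such that for all `r ≥ 1` and `x ∈ ℝ`,
`|J(r,x) - 1/r| ≤ c e^{-r}`. -/
theorem stmt0 : ∃ c : ℝ, ∀ r : ℝ, 1 ≤ r → ∀ x : ℝ,
    |Jfun r x - 1 / r| ≤ c * Real.exp (-r) := by
  refine ⟨2 * exp 1 * ∑' n : ℤ, (1 + |(n : ℝ)|) * exp (-|(n : ℝ)|), fun r hr x => ?_⟩
  have hr0 : 0 < r := by linarith
  have herr := norm_tsum_sechSq_add_int_sub_le (c := π ^ 2 / r) (by positivity) (x / (2 * π))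
  rw [show π ^ 2 / (π ^ 2 / r) = r by field_simp] at herr
  have hJ : Jfun r x - 1 / r = π ^ 2 / (2 * r ^ 2) *
      ((∑' k : ℤ, (cosh (π ^ 2 / r * (x / (2 * π) + k)) ^ 2)⁻¹) - 2 / (π ^ 2 / r)) := by
    rw [Jfun_eq_tsum_inv_cosh_sq]
    field_simp
  calc |Jfun r x - 1 / r|
      = π ^ 2 / (2 * r ^ 2) *
          ‖∑' k : ℤ, sechSq (π ^ 2 / r) (x / (2 * π) + k) - ((2 / (π ^ 2 / r) : ℝ) : ℂ)‖ := by
        rw [hJ, abs_mul, abs_of_pos (by positivity), ← Real.norm_eq_abs, ← Complex.norm_real,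
          Complex.ofReal_sub, Complex.ofReal_tsum]
        rfl
    _ ≤ π ^ 2 / (2 * r ^ 2) * ∑' n : ℤ, 2 / (π ^ 2 / r) * (r * n / sinh (r * n)) := by gcongr
    _ = ∑' n : ℤ, r⁻¹ * (r * n / sinh (r * n)) := by
      rw [← tsum_mul_left]
      congr 1 with n
      field_simp
    _ ≤ _ := tsum_inv_mul_mul_div_sinh_mul_le hr
end

section
/- There exist ρ ∈ (0, 1/2) and r₀ > 0 such that for all 0 < r ≤ r₀, ρπ/r ≤ ∫_0^r J(r,x) dx ≤ (1−ρ)π/r. -/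
/-!
The `k = 0` summand of `J(r, ·)` alone integrates over `[0, r]` to `tanh (π / 2) · π / r`,
and `3/5 ≤ tanh (π / 2) ≤ 27/28`. For `r ≤ 1` and `x ∈ [0, r]` the summand of index `k ≠ 0`
is at most `4 e^{-15|k|}` because `cosh⁻² t ≤ 4 e^{-2|t|}`, so all of them together add at most
`1/100` to the series and at most `π² / (200 r)` to the integral. Hence `ρ = 1/100`, `r₀ = 1`.
-/

open Real

open Set MeasureTheory

theorem Real.hasDerivAt_tanh (x : ℝ) : HasDerivAt tanh (cosh x ^ 2)⁻¹ x := by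
  have h := (hasDerivAt_sinh x).div (hasDerivAt_cosh x) (cosh_pos x).ne'
  rw [show tanh = sinh / cosh from funext tanh_eq_sinh_div_cosh]
  refine h.congr_deriv ?_
  rw [← sq, ← sq, cosh_sq_sub_sinh_sq, one_div]

theorem Real.tanh_eq_one_sub (x : ℝ) : tanh x = 1 - 2 / (exp (2 * x) + 1) := by
  rw [tanh_eq_sinh_div_cosh, sinh_eq, cosh_eq, exp_neg, two_mul, exp_add]
  field_simp
  ring

theorem Real.inv_cosh_sq_le_one (t : ℝ) : (cosh t ^ 2)⁻¹ ≤ 1 :=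
  inv_le_one_of_one_le₀ (one_le_pow₀ (one_le_cosh t))

theorem Real.inv_cosh_sq_le_four_mul_exp (t : ℝ) :
    (cosh t ^ 2)⁻¹ ≤ 4 * exp (-(2 * |t|)) := by
  have h : exp |t| / 2 ≤ cosh t := by
    rw [← cosh_abs, cosh_eq]
    linarith [exp_pos (-|t|)]
  calc (cosh t ^ 2)⁻¹ ≤ ((exp |t| / 2) ^ 2)⁻¹ := by gcongr
    _ = 4 * exp (-(2 * |t|)) := by
      rw [exp_neg, two_mul, exp_add]
      field_simp
      norm_num

theorem integral_inv_cosh_sq_mul {a : ℝ} (ha : a ≠ 0) (b : ℝ) :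
    ∫ x in (0 : ℝ)..b, (cosh (a * x) ^ 2)⁻¹ = tanh (a * b) / a := by
  have hcont : Continuous fun x => (cosh x ^ 2)⁻¹ :=
    (continuous_cosh.pow 2).inv₀ fun x => (pow_pos (cosh_pos x) 2).ne'
  rw [intervalIntegral.integral_comp_mul_left (fun x => (cosh x ^ 2)⁻¹) ha,
    intervalIntegral.integral_eq_sub_of_hasDerivAt (fun x _ => hasDerivAt_tanh x)
      (hcont.intervalIntegrable _ _)]
  simp [div_eq_inv_mul]

theorem hasSum_pow_natAbs {q : ℝ} (h0 : 0 ≤ q) (h1 : q < 1) :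
    HasSum (fun k : ℤ => q ^ k.natAbs) ((1 + q) / (1 - q)) := by
  have hgeo := hasSum_geometric_of_lt_one h0 h1
  have hneg : HasSum (fun n : ℕ => q ^ (-((n : ℤ) + 1)).natAbs) (q * (1 - q)⁻¹) := by
    have e : (fun n : ℕ => q ^ (-((n : ℤ) + 1)).natAbs) = fun n => q * q ^ n := by
      funext n
      rw [Int.natAbs_neg, ← Nat.cast_succ, Int.natAbs_natCast, pow_succ']
    rw [e]
    exact hgeo.mul_left q
  have hpos : HasSum (fun n : ℕ => q ^ (n : ℤ).natAbs) (1 - q)⁻¹ := by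
    simpa only [Int.natAbs_natCast] using hgeo
  have h := HasSum.of_nat_of_neg_add_one (f := fun k : ℤ => q ^ k.natAbs) hpos hneg
  rwa [show (1 - q)⁻¹ + q * (1 - q)⁻¹ = (1 + q) / (1 - q) by ring] at h

theorem tsum_le_add_tsum_sub {ι : Type*} {f g : ι → ℝ} (hf : Summable f) (hg : Summable g)
    (h : ∀ i, f i ≤ g i) (i : ι) : ∑' j, f j ≤ f i + (∑' j, g j - g i) := by
  have := (hg.sub hf).le_tsum i fun j _ => sub_nonneg.2 (h j)
  rw [hg.tsum_sub hf] at this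
  linarith

theorem exp_neg_fifteen_le : exp (-15) ≤ 1 / 1000 := by
  have h3 : 4 ≤ exp 3 := by linarith [add_one_le_exp (3 : ℝ)]
  have h15 : exp 15 = exp 3 ^ 5 := by rw [← exp_nat_mul]; norm_num
  rw [exp_neg, h15, one_div]
  gcongr
  calc (1000 : ℝ) ≤ 4 ^ 5 := by norm_num
    _ ≤ exp 3 ^ 5 := by gcongr

theorem three_fifths_le_tanh_pi_div_two : 3 / 5 ≤ tanh (π / 2) := by
  have h : 4 ≤ exp π := by linarith [add_one_le_exp π, pi_gt_three]
  rw [tanh_eq_one_sub, mul_div_cancel₀ _ two_ne_zero]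
  have : 2 / (exp π + 1) ≤ 2 / 5 := by gcongr; linarith
  linarith

theorem tanh_pi_div_two_le : tanh (π / 2) ≤ 27 / 28 := by
  have h : exp π ≤ 55 := by
    have h4 : exp 4 = exp 1 ^ 4 := by rw [← exp_nat_mul]; norm_num
    calc exp π ≤ exp 4 := exp_le_exp.2 pi_le_four
      _ ≤ 2.7182818286 ^ 4 := by rw [h4]; gcongr; exact exp_one_lt_d9.le
      _ ≤ 55 := by norm_num
  rw [tanh_eq_one_sub, mul_div_cancel₀ _ two_ne_zero]
  have : 2 / 56 ≤ 2 / (exp π + 1) := by gcongr; linarith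
  linarith

noncomputable def jTerm (r : ℝ) (k : ℤ) (x : ℝ) : ℝ :=
  (cosh (π * (x + 2 * (k : ℝ) * π) / (2 * r)) ^ 2)⁻¹

theorem Jfun_eq (r x : ℝ) : Jfun r x = π ^ 2 / (2 * r ^ 2) * ∑' k, jTerm r k x := rfl

theorem jTerm_nonneg (r : ℝ) (k : ℤ) (x : ℝ) : 0 ≤ jTerm r k x := by
  unfold jTerm; positivity

theorem continuous_jTerm (r : ℝ) (k : ℤ) : Continuous (jTerm r k) := by
  unfold jTerm
  exact Continuous.inv₀ (by fun_prop) fun x => (pow_pos (cosh_pos _) 2).ne'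

theorem integral_jTerm_zero {r : ℝ} (hr : 0 < r) :
    ∫ x in (0 : ℝ)..r, jTerm r 0 x = 2 * r / π * tanh (π / 2) := by
  have e : ∀ x, jTerm r 0 x = (cosh (π / (2 * r) * x) ^ 2)⁻¹ := fun x => by
    simp only [jTerm, Int.cast_zero, mul_zero, zero_mul, add_zero, mul_div_right_comm]
  simp_rw [e]
  rw [integral_inv_cosh_sq_mul (by positivity)]
  field_simp

section

variable {r x : ℝ}

/-- The exponent `15 |k|` comes from `|x + 2kπ| ≥ 5 |k|` for `k ≠ 0` and `π / (2r) ≥ 3/2`. -/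
theorem jTerm_le (hr : 0 < r) (hr1 : r ≤ 1) (hx : x ∈ Icc 0 r) (k : ℤ) :
    jTerm r k x ≤ 4 * exp (-15) ^ k.natAbs := by
  rcases eq_or_ne k 0 with rfl | hk
  · rw [Int.natAbs_zero, pow_zero, mul_one]
    exact (inv_cosh_sq_le_one _).trans (by norm_num)
  refine (inv_cosh_sq_le_four_mul_exp _).trans ?_
  rw [← exp_nat_mul, Nat.cast_natAbs, Int.cast_abs]
  gcongr
  have hK : 1 ≤ |(k : ℝ)| := by exact_mod_cast Int.one_le_abs hk
  have hdist : 5 * |(k : ℝ)| ≤ |x + 2 * k * π| := by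
    have := abs_sub_abs_le_abs_sub (2 * (k : ℝ) * π) (-x)
    rw [sub_neg_eq_add, abs_neg, abs_of_nonneg hx.1, abs_mul, abs_mul, abs_two,
      abs_of_pos pi_pos, add_comm] at this
    nlinarith [mul_le_mul_of_nonneg_left pi_gt_three.le (abs_nonneg (k : ℝ)), hx.2]
  have hscale : 15 * |(k : ℝ)| ≤ π * |x + 2 * k * π| / r := by
    rw [le_div_iff₀ hr]
    nlinarith [mul_le_mul pi_gt_three.le hdist (by positivity) pi_pos.le]
  rw [abs_div, abs_mul, abs_of_pos pi_pos, abs_of_pos (by positivity : (0 : ℝ) < 2 * r)]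
  have : 2 * (π * |x + 2 * k * π| / (2 * r)) = π * |x + 2 * k * π| / r := by field_simp
  linarith

theorem hasSum_four_mul_exp_neg_fifteen_pow :
    HasSum (fun k : ℤ => 4 * exp (-15) ^ k.natAbs) (4 * ((1 + exp (-15)) / (1 - exp (-15)))) :=
  (hasSum_pow_natAbs (exp_pos _).le (exp_lt_one_iff.2 (by norm_num))).mul_left 4

theorem summable_jTerm (hr : 0 < r) (hr1 : r ≤ 1) (hx : x ∈ Icc 0 r) :
    Summable (jTerm r · x) :=
  hasSum_four_mul_exp_neg_fifteen_pow.summable.of_nonneg_of_le (jTerm_nonneg r · x)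
    (jTerm_le hr hr1 hx)

theorem jTerm_zero_le_tsum (hr : 0 < r) (hr1 : r ≤ 1) (hx : x ∈ Icc 0 r) :
    jTerm r 0 x ≤ ∑' k, jTerm r k x :=
  (summable_jTerm hr hr1 hx).le_tsum 0 fun k _ => jTerm_nonneg r k x

theorem tsum_jTerm_le (hr : 0 < r) (hr1 : r ≤ 1) (hx : x ∈ Icc 0 r) :
    ∑' k, jTerm r k x ≤ jTerm r 0 x + 1 / 100 := by
  have h := tsum_le_add_tsum_sub (summable_jTerm hr hr1 hx)
    hasSum_four_mul_exp_neg_fifteen_pow.summable (jTerm_le hr hr1 hx) 0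
  rw [hasSum_four_mul_exp_neg_fifteen_pow.tsum_eq, Int.natAbs_zero, pow_zero, mul_one] at h
  have hq := exp_neg_fifteen_le
  have hratio : (1 + exp (-15)) / (1 - exp (-15)) ≤ 1 + 1 / 400 := by
    rw [div_le_iff₀ (by linarith)]
    nlinarith [exp_pos (-15)]
  linarith

theorem intervalIntegrable_Jfun (hr : 0 < r) (hr1 : r ≤ 1) :
    IntervalIntegrable (Jfun r) volume 0 r := by
  have hcont : ContinuousOn (fun x => ∑' k, jTerm r k x) (Icc 0 r) :=
    continuousOn_tsum (fun k => (continuous_jTerm r k).continuousOn)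
      hasSum_four_mul_exp_neg_fifteen_pow.summable fun k x hx => by
        rw [norm_of_nonneg (jTerm_nonneg r k x)]
        exact jTerm_le hr hr1 hx k
  exact (continuousOn_const.mul hcont).intervalIntegrable_of_Icc hr.le

theorem integral_Jfun_ge (hr : 0 < r) (hr1 : r ≤ 1) :
    tanh (π / 2) * π / r ≤ ∫ x in (0 : ℝ)..r, Jfun r x := by
  calc tanh (π / 2) * π / r = ∫ x in (0 : ℝ)..r, π ^ 2 / (2 * r ^ 2) * jTerm r 0 x := by
        rw [intervalIntegral.integral_const_mul, integral_jTerm_zero hr]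
        field_simp
    _ ≤ ∫ x in (0 : ℝ)..r, Jfun r x :=
        intervalIntegral.integral_mono_on hr.le
          (((continuous_jTerm r 0).intervalIntegrable _ _).const_mul _)
          (intervalIntegrable_Jfun hr hr1) fun x hx => by
            rw [Jfun_eq]
            gcongr
            exact jTerm_zero_le_tsum hr hr1 hx

theorem integral_Jfun_le (hr : 0 < r) (hr1 : r ≤ 1) :
    ∫ x in (0 : ℝ)..r, Jfun r x ≤ (tanh (π / 2) + π / 200) * π / r := by
  calc ∫ x in (0 : ℝ)..r, Jfun r x
      ≤ ∫ x in (0 : ℝ)..r, π ^ 2 / (2 * r ^ 2) * (jTerm r 0 x + 1 / 100) :=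
        intervalIntegral.integral_mono_on hr.le (intervalIntegrable_Jfun hr hr1)
          ((((continuous_jTerm r 0).add continuous_const).intervalIntegrable _ _).const_mul _)
          fun x hx => by
            rw [Jfun_eq]
            gcongr
            exact tsum_jTerm_le hr hr1 hx
    _ = (tanh (π / 2) + π / 200) * π / r := by
        rw [intervalIntegral.integral_const_mul,
          intervalIntegral.integral_add ((continuous_jTerm r 0).intervalIntegrable _ _)
            intervalIntegrable_const,
          integral_jTerm_zero hr, intervalIntegral.integral_const, smul_eq_mul]
        field_simp
        ring

end

/-- There exist `ρ ∈ (0, 1/2)` and `r₀ > 0` such that for all `0 < r ≤ r₀`,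
`ρπ/r ≤ ∫_0^r J(r,x) dx ≤ (1-ρ)π/r`. -/
theorem stmt2 : ∃ ρ : ℝ, 0 < ρ ∧ ρ < 1 / 2 ∧ ∃ r₀ : ℝ, 0 < r₀ ∧
    ∀ r : ℝ, 0 < r → r ≤ r₀ →
      ρ * π / r ≤ (∫ x in (0:ℝ)..r, Jfun r x) ∧
      (∫ x in (0:ℝ)..r, Jfun r x) ≤ (1 - ρ) * π / r := by
  refine ⟨1 / 100, by norm_num, by norm_num, 1, one_pos, fun r hr hr1 => ⟨?_, ?_⟩⟩
  · calc 1 / 100 * π / r ≤ tanh (π / 2) * π / r := by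
          gcongr
          linarith [three_fifths_le_tanh_pi_div_two]
      _ ≤ _ := integral_Jfun_ge hr hr1
  · calc _ ≤ (tanh (π / 2) + π / 200) * π / r := integral_Jfun_le hr hr1
      _ ≤ (1 - 1 / 100) * π / r := by
          gcongr
          linarith [tanh_pi_div_two_le, pi_le_four]
end

section
/- For every r > 0 and every x with 0 ≤ x ≤ π, one has r·H_I(r,x) ≤ π − x. -/
/-!
`J(r, ·)` is the `2π`-periodization of `t ↦ (π²/(2r²)) sech²(π t / (2r))`, whose integral
over `ℝ` is `2π/r` (an antiderivative is a multiple of `tanh`). Integrating the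
periodization over one period gives the integral over `ℝ`, so `∫_{-π}^{π} J = 2π/r`, and by
evenness `∫_0^π J = π/r`. Since `J ≥ 0`, `∫_0^x J ≤ π/r` for `0 ≤ x ≤ π`, which is the claim
because `r H_I(r, x) = r ∫_0^x J - x`.
-/

open Real

/-- `H_I(r,x) = ∫_0^x (J(r,y) - 1/r) dy`. -/
noncomputable def HI (r x : ℝ) : ℝ := ∫ y in (0:ℝ)..x, (Jfun r y - 1 / r)

open MeasureTheory Filter Topology Set intervalIntegral

namespace Real

theorem hasDerivAt_tanh_s4 (x : ℝ) : HasDerivAt tanh (cosh x ^ 2)⁻¹ x := by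
  have h := (hasDerivAt_sinh x).div (hasDerivAt_cosh x) (cosh_pos x).ne'
  rw [show cosh x * cosh x - sinh x * sinh x = 1 by rw [← cosh_sq_sub_sinh_sq x]; ring,
    one_div] at h
  exact h.congr_of_eventuallyEq (.of_forall fun y => tanh_eq_sinh_div_cosh y)

theorem tanh_eq_one_sub_s4 (x : ℝ) : tanh x = 1 - 2 / (exp (2 * x) + 1) := by
  have : exp (2 * x) = exp x * exp x := by rw [two_mul, exp_add]
  rw [tanh_eq, exp_neg, this]
  field_simp
  ring

theorem tendsto_tanh_atTop : Tendsto tanh atTop (𝓝 1) := by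
  have hden : Tendsto (fun x => exp (2 * x) + 1) atTop atTop :=
    tendsto_atTop_add_const_right _ 1 (tendsto_exp_atTop.comp (tendsto_id.const_mul_atTop two_pos))
  have h := (tendsto_const_nhds (x := (1 : ℝ))).sub
    (tendsto_const_nhds (x := (2 : ℝ)).div_atTop hden)
  rw [sub_zero] at h
  exact h.congr fun x => (tanh_eq_one_sub_s4 x).symm

theorem tendsto_tanh_atBot : Tendsto tanh atBot (𝓝 (-1)) := by
  simpa [Function.comp_def] using (tendsto_tanh_atTop.comp tendsto_neg_atBot_atTop).neg

theorem continuous_inv_cosh_sq : Continuous fun t => (cosh t ^ 2)⁻¹ :=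
  (continuous_cosh.pow 2).inv₀ fun t => pow_ne_zero 2 (cosh_pos t).ne'

theorem integrable_inv_cosh_sq : Integrable fun t => (cosh t ^ 2)⁻¹ := by
  refine integrable_of_intervalIntegral_norm_bounded 2
    (fun i => continuous_inv_cosh_sq.integrableOn_Ioc) tendsto_neg_atTop_atBot tendsto_id
    (.of_forall fun i => ?_)
  have hint : ∫ t in -i..id i, ‖(cosh t ^ 2)⁻¹‖ = tanh i - tanh (-i) := by
    simp only [norm_inv, norm_pow, norm_eq_abs, abs_of_pos (cosh_pos _), id]
    exact integral_eq_sub_of_hasDerivAt (fun t _ => hasDerivAt_tanh_s4 t)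
      (continuous_inv_cosh_sq.intervalIntegrable _ _)
  rw [hint, tanh_neg]
  linarith [(abs_lt.1 (abs_tanh_lt_one i)).2]

theorem integral_inv_cosh_sq : ∫ t, (cosh t ^ 2)⁻¹ = 2 := by
  rw [integral_of_hasDerivAt_of_tendsto hasDerivAt_tanh_s4 integrable_inv_cosh_sq
    tendsto_tanh_atBot tendsto_tanh_atTop]
  norm_num

theorem inv_cosh_sq_le (t : ℝ) : (cosh t ^ 2)⁻¹ ≤ 4 * exp (-2 * |t|) := by
  have hexp : exp |t| ≤ 2 * cosh t := by
    rw [← cosh_abs, cosh_eq]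
    linarith [exp_pos (-|t|)]
  have hsq : exp (2 * |t|) ≤ 4 * cosh t ^ 2 := by
    rw [two_mul, exp_add]
    nlinarith [exp_pos |t|]
  rw [neg_mul, exp_neg, ← div_eq_mul_inv, le_div_iff₀ (exp_pos _), inv_mul_eq_div,
    div_le_iff₀ (by positivity)]
  linarith

end Real

section Periodization

variable {E : Type*} [NormedAddCommGroup E] {f : ℝ → E} {T c : ℝ} {u : ℤ → ℝ}

theorem tsum_comp_neg_add_mul (hf : ∀ t, f (-t) = f t) (y : ℝ) :
    ∑' n : ℤ, f (-y + n * T) = ∑' n : ℤ, f (y + n * T) := by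
  rw [← (Equiv.neg ℤ).tsum_eq]
  refine tsum_congr fun n => ?_
  rw [← hf]
  simp only [Equiv.neg_apply, Int.cast_neg]
  ring_nf

theorem continuousOn_tsum_comp_add_mul [CompleteSpace E] (hf : Continuous f) (hu : Summable u)
    (hbound : ∀ n : ℤ, ∀ y ∈ Icc c (c + T), ‖f (y + n * T)‖ ≤ u n) :
    ContinuousOn (fun y => ∑' n : ℤ, f (y + n * T)) (Icc c (c + T)) :=
  continuousOn_tsum (fun _ => (hf.comp (continuous_add_const _)).continuousOn) hu hbound

variable [NormedSpace ℝ E]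

theorem MeasureTheory.Integrable.hasSum_intervalIntegral_comp_add_mul (hf : Integrable f)
    (hT : 0 < T) (c : ℝ) :
    HasSum (fun n : ℤ => ∫ y in c..c + T, f (y + n * T)) (∫ y, f y) := by
  rw [← setIntegral_univ, ← iUnion_Ioc_add_zsmul hT c]
  refine (hasSum_integral_iUnion (fun _ => measurableSet_Ioc)
    (pairwise_disjoint_Ioc_add_zsmul c T) hf.integrableOn).congr_fun fun n => ?_
  rw [integral_comp_add_right, integral_of_le (by linarith), zsmul_eq_mul, zsmul_eq_mul]
  push_cast
  ring_nf

theorem intervalIntegral_tsum_comp_add_mul [CompleteSpace E] (hf : Integrable f) (hT : 0 < T)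
    (hu : Summable u) (hbound : ∀ n : ℤ, ∀ y ∈ Icc c (c + T), ‖f (y + n * T)‖ ≤ u n) :
    ∫ y in c..c + T, ∑' n : ℤ, f (y + n * T) = ∫ y, f y := by
  have hIoc : ∀ y ∈ uIoc c (c + T), y ∈ Icc c (c + T) := fun y hy => by
    rw [uIoc_of_le (by linarith)] at hy
    exact Ioc_subset_Icc_self hy
  refine ((hasSum_integral_of_dominated_convergence (fun n _ => u n)
    (fun n => (hf.comp_add_right _).aestronglyMeasurable.restrict)
    (fun n => .of_forall fun y hy => hbound n y (hIoc y hy))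
    (.of_forall fun _ _ => hu) intervalIntegrable_const
    (.of_forall fun y hy => ?_)).unique (hf.hasSum_intervalIntegral_comp_add_mul hT c))
  exact (hu.of_norm_bounded fun n => hbound n y (hIoc y hy)).hasSum

end Periodization

theorem intervalIntegral_neg_eq_two_mul_of_even {f : ℝ → ℝ} (hf : ∀ t, f (-t) = f t) {c : ℝ}
    (hc : 0 ≤ c) (hi : IntervalIntegrable f volume (-c) c) :
    ∫ t in -c..c, f t = 2 * ∫ t in 0..c, f t := by
  have hneg : ∫ t in -c..0, f t = ∫ t in 0..c, f t := by
    simpa [hf] using (integral_comp_neg (a := 0) (b := c) f).symm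
  rw [← integral_add_adjacent_intervals (hi.mono_set _) (hi.mono_set _), hneg, two_mul]
  · exact uIcc_subset_uIcc_left (by simp [hc])
  · exact uIcc_subset_uIcc_right (by simp [hc])

theorem summable_pow_natAbs {ρ : ℝ} (h0 : 0 ≤ ρ) (h1 : ρ < 1) :
    Summable fun k : ℤ => ρ ^ k.natAbs := by
  have h := summable_geometric_of_lt_one h0 h1
  exact .of_nat_of_neg (by simpa using h) (by simpa using h)

theorem summable_four_mul_exp_pow_natAbs {a : ℝ} (ha : 0 < a) :
    Summable fun k : ℤ => 4 * exp (-(2 * a * π)) ^ k.natAbs :=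
  (summable_pow_natAbs (exp_nonneg _) (exp_lt_one_iff.2 (neg_lt_zero.2 (by positivity)))).mul_left 4

theorem pi_mul_natAbs_le_abs_add {y : ℝ} (hy : |y| ≤ π) (k : ℤ) :
    π * k.natAbs ≤ |y + k * (2 * π)| := by
  rcases eq_or_ne k 0 with rfl | hk
  · simp
  have hk1 : (1 : ℝ) ≤ k.natAbs := by exact_mod_cast Int.natAbs_pos.2 hk
  have habs : |k * (2 * π)| = 2 * π * k.natAbs := by
    rw [abs_mul, abs_of_pos (by positivity : (0 : ℝ) < 2 * π), Nat.cast_natAbs, Int.cast_abs]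
    ring
  have := abs_sub_abs_le_abs_sub (k * (2 * π)) (-y)
  rw [habs, abs_neg, sub_neg_eq_add, add_comm] at this
  nlinarith [pi_pos]

theorem norm_inv_cosh_sq_mul_add_le {a y : ℝ} (ha : 0 ≤ a) (k : ℤ)
    (hy : y ∈ Icc (-π) (-π + 2 * π)) :
    ‖(cosh (a * (y + k * (2 * π))) ^ 2)⁻¹‖ ≤ 4 * exp (-(2 * a * π)) ^ k.natAbs := by
  have hy : |y| ≤ π := abs_le.2 ⟨hy.1, by linarith [hy.2]⟩
  rw [norm_of_nonneg (by positivity)]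
  refine (inv_cosh_sq_le _).trans ?_
  rw [← exp_nat_mul, abs_mul, abs_of_nonneg ha]
  gcongr 4 * exp ?_
  nlinarith [pi_mul_natAbs_le_abs_add hy k]

section Jfun

theorem Jfun_eq_mul_tsum (r x : ℝ) :
    Jfun r x = π ^ 2 / (2 * r ^ 2) * ∑' k : ℤ, (cosh (π / (2 * r) * (x + k * (2 * π))) ^ 2)⁻¹ := by
  unfold Jfun
  congr 1
  refine tsum_congr fun k => ?_
  ring_nf

theorem Jfun_nonneg (r x : ℝ) : 0 ≤ Jfun r x := by
  rw [Jfun_eq_mul_tsum]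
  exact mul_nonneg (by positivity) (tsum_nonneg fun k => by positivity)

theorem Jfun_neg (r x : ℝ) : Jfun r (-x) = Jfun r x := by
  rw [Jfun_eq_mul_tsum, Jfun_eq_mul_tsum,
    tsum_comp_neg_add_mul (f := fun t => (cosh (π / (2 * r) * t) ^ 2)⁻¹)
      (fun t => by simp only [mul_neg, cosh_neg])]

variable {r : ℝ}

theorem continuousOn_Jfun (hr : 0 < r) : ContinuousOn (Jfun r) (Icc (-π) π) := by
  have h := continuousOn_tsum_comp_add_mul
    (continuous_inv_cosh_sq.comp (continuous_const_mul (π / (2 * r))))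
    (summable_four_mul_exp_pow_natAbs (by positivity))
    (fun k _ => norm_inv_cosh_sq_mul_add_le (by positivity) k)
  rw [show -π + 2 * π = π by ring] at h
  simp_rw [funext (Jfun_eq_mul_tsum r)]
  exact continuousOn_const.mul h

theorem integral_Jfun_neg_pi_pi (hr : 0 < r) : ∫ y in -π..π, Jfun r y = 2 * (π / r) := by
  have hint : Integrable fun t => (cosh (π / (2 * r) * t) ^ 2)⁻¹ :=
    integrable_inv_cosh_sq.comp_mul_left' (by positivity)
  have h := intervalIntegral_tsum_comp_add_mul hint (by positivity : 0 < 2 * π)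
    (summable_four_mul_exp_pow_natAbs (by positivity))
    (fun k _ => norm_inv_cosh_sq_mul_add_le (by positivity) k)
  rw [show -π + 2 * π = π by ring] at h
  simp_rw [Jfun_eq_mul_tsum r, intervalIntegral.integral_const_mul, h,
    Measure.integral_comp_mul_left (fun t => (cosh t ^ 2)⁻¹), integral_inv_cosh_sq,
    abs_of_pos (by positivity : 0 < (π / (2 * r))⁻¹), smul_eq_mul]
  field_simp

theorem integral_Jfun_zero_pi (hr : 0 < r) : ∫ y in 0..π, Jfun r y = π / r := by
  have h := intervalIntegral_neg_eq_two_mul_of_even (Jfun_neg r) pi_pos.le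
    ((continuousOn_Jfun hr).intervalIntegrable_of_Icc (by linarith [pi_pos]))
  rw [integral_Jfun_neg_pi_pi hr] at h
  linarith

end Jfun

/-- For every `r > 0` and `0 ≤ x ≤ π`, `r·H_I(r,x) ≤ π - x`. -/
theorem stmt4 : ∀ r : ℝ, 0 < r → ∀ x : ℝ, 0 ≤ x → x ≤ π →
    r * HI r x ≤ π - x := by
  intro r hr x hx0 hxπ
  have hJ : IntervalIntegrable (Jfun r) volume 0 π :=
    ((continuousOn_Jfun hr).mono (Icc_subset_Icc_left (by linarith [pi_pos])))
      |>.intervalIntegrable_of_Icc pi_pos.le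
  have hle : ∫ y in 0..x, Jfun r y ≤ π / r := integral_Jfun_zero_pi hr ▸
    integral_mono_interval le_rfl hx0 hxπ (.of_forall (Jfun_nonneg r)) hJ
  have hHI : HI r x = (∫ y in 0..x, Jfun r y) - x / r := by
    rw [HI, intervalIntegral.integral_sub
      (hJ.mono_set (uIcc_subset_uIcc_left (mem_uIcc_of_le hx0 hxπ))) intervalIntegrable_const,
      intervalIntegral.integral_const, smul_eq_mul, sub_zero, mul_one_div]
  calc r * HI r x = r * (∫ y in 0..x, Jfun r y) - x := by
        rw [hHI, mul_sub, mul_div_cancel₀ _ hr.ne']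
    _ ≤ r * (π / r) - x := by gcongr
    _ = π - x := by rw [mul_div_cancel₀ _ hr.ne']
end

section
/- For every y ∈ ℝ, the function f(x) = cosh(x)²/cosh(x−y)² + cosh(x)²/cosh(x+y)² is monotone nondecreasing on [0,∞) (and strictly increasing there if y ≠ 0). -/
/-!
Write `a = cosh (x - y)` and `b = cosh (x + y)`. Since `(cosh x / cosh (x + c))' = -sinh c / cosh² (x + c)`,
the derivative of `f` is `2 cosh x sinh y (a⁻³ - b⁻³) = 2 cosh x sinh y (b - a)(a² + ab + b²) / (ab)³`,
and `b - a = 2 sinh x sinh y`. So `f' = 4 sinh x cosh x sinh² y (a² + ab + b²) / (ab)³`, which is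
nonnegative for `x ≥ 0` and positive for `x > 0` when `y ≠ 0`.
-/

open Real

namespace Real

theorem cosh_add_sub_cosh_sub (x y : ℝ) : cosh (x + y) - cosh (x - y) = 2 * sinh x * sinh y := by
  rw [cosh_add, cosh_sub]
  ring

theorem hasDerivAt_cosh_div_cosh_add (x c : ℝ) :
    HasDerivAt (fun t => cosh t / cosh (t + c)) (-sinh c / cosh (x + c) ^ 2) x := by
  have hden : HasDerivAt (fun t => cosh (t + c)) (sinh (x + c)) x := by
    simpa using ((hasDerivAt_id x).add_const c).cosh
  refine ((hasDerivAt_cosh x).div hden (cosh_pos (x + c)).ne').congr_deriv ?_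
  rw [← sinh_neg, show -c = x - (x + c) by ring, sinh_sub]

theorem hasDerivAt_cosh_sq_div_cosh_sub_sq_add_cosh_sq_div_cosh_add_sq (x y : ℝ) :
    HasDerivAt (fun t => cosh t ^ 2 / cosh (t - y) ^ 2 + cosh t ^ 2 / cosh (t + y) ^ 2)
      (4 * sinh x * cosh x * sinh y ^ 2
        * (cosh (x - y) ^ 2 + cosh (x - y) * cosh (x + y) + cosh (x + y) ^ 2)
        / (cosh (x - y) * cosh (x + y)) ^ 3) x := by
  have ha := cosh_pos (x - y)
  have hb := cosh_pos (x + y)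
  have h := ((hasDerivAt_cosh_div_cosh_add x (-y)).fun_pow 2).fun_add
    ((hasDerivAt_cosh_div_cosh_add x y).fun_pow 2)
  simp only [← sub_eq_add_neg, div_pow, sinh_neg, neg_neg, Nat.reduceSub, pow_one,
    Nat.cast_ofNat] at h
  refine h.congr_deriv ?_
  field_simp
  linear_combination (2 * sinh y * (cosh (x - y) ^ 2 + cosh (x - y) * cosh (x + y)
    + cosh (x + y) ^ 2)) * cosh_add_sub_cosh_sub x y

end Real

/-- For every `y ∈ ℝ`, `f(x) = cosh(x)²/cosh(x-y)² + cosh(x)²/cosh(x+y)²` is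
nondecreasing on `[0,∞)`, and strictly increasing there if `y ≠ 0`. -/
theorem stmt8 (y : ℝ) :
    MonotoneOn
      (fun x : ℝ => (Real.cosh x) ^ 2 / (Real.cosh (x - y)) ^ 2
        + (Real.cosh x) ^ 2 / (Real.cosh (x + y)) ^ 2) (Set.Ici (0:ℝ)) ∧
    (y ≠ 0 → StrictMonoOn
      (fun x : ℝ => (Real.cosh x) ^ 2 / (Real.cosh (x - y)) ^ 2
        + (Real.cosh x) ^ 2 / (Real.cosh (x + y)) ^ 2) (Set.Ici (0:ℝ))) := by
  have hf := hasDerivAt_cosh_sq_div_cosh_sub_sq_add_cosh_sq_div_cosh_add_sq (y := y)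
  have hcont : ContinuousOn _ (Set.Ici (0:ℝ)) :=
    fun x _ => (hf x).continuousAt.continuousWithinAt
  constructor
  · refine monotoneOn_of_deriv_nonneg (convex_Ici 0) hcont
      (fun x _ => (hf x).differentiableAt.differentiableWithinAt) fun x hx => ?_
    rw [interior_Ici] at hx
    have hsx : 0 < sinh x := sinh_pos_iff.2 hx
    rw [(hf x).deriv]
    positivity
  · intro hy
    refine strictMonoOn_of_deriv_pos (convex_Ici 0) hcont fun x hx => ?_
    rw [interior_Ici] at hx
    have hsx : 0 < sinh x := sinh_pos_iff.2 hx
    have hsy : sinh y ≠ 0 := sinh_ne_zero.2 hy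
    rw [(hf x).deriv]
    positivity
end

section
/- For every y > 0, the function f(x) = sinh(x)²/sinh(x−y)² + sinh(x)²/sinh(x+y)² is monotone nondecreasing on the interval [0, y). -/
open Real

lemma two_sinh_mul_sinh (A B : ℝ) :
    2 * (Real.sinh A * Real.sinh B) = Real.cosh (A + B) - Real.cosh (A - B) := by
  rw [Real.cosh_add, Real.cosh_sub]; ring

/-- For every `y > 0`, `f(x) = sinh(x)²/sinh(x-y)² + sinh(x)²/sinh(x+y)²` is
nondecreasing on `[0, y)`. -/
theorem stmt10 (y : ℝ) (hy : 0 < y) :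
    MonotoneOn
      (fun x : ℝ => (Real.sinh x) ^ 2 / (Real.sinh (x - y)) ^ 2
        + (Real.sinh x) ^ 2 / (Real.sinh (x + y)) ^ 2) (Set.Ico (0:ℝ) y) := by
  rintro a ⟨ha0, hay⟩ b ⟨hb0, hby⟩ hab
  simp only
  -- key cosh inequality
  have key : Real.cosh (a + y - b) ≤ Real.cosh (b + y - a) := by
    rw [Real.cosh_le_cosh]
    rw [abs_of_nonneg (by linarith), abs_of_nonneg (by linarith)]
    linarith
  have key' : Real.cosh (a - b - y) = Real.cosh (b + y - a) := by
    rw [← Real.cosh_neg]; ring_nf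
  have key'' : Real.cosh (b - a - y) = Real.cosh (a + y - b) := by
    rw [← Real.cosh_neg]; ring_nf
  -- first product inequality: sinh a * sinh (y-b) ≤ sinh b * sinh (y-a)
  have e1 := two_sinh_mul_sinh a (y - b)
  have e2 := two_sinh_mul_sinh b (y - a)
  have h1 : a + (y - b) = a + y - b := by ring
  have h2 : a - (y - b) = -(b + y - a) + 2*b := by ring
  have key1 : Real.sinh a * Real.sinh (y - b) ≤ Real.sinh b * Real.sinh (y - a) := by
    have ea : Real.cosh (a - (y - b)) = Real.cosh (b - (y - a)) := by
      congr 1; ring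
    rw [h1, ea] at e1
    have hb' : b + (y - a) = b + y - a := by ring
    rw [hb'] at e2
    linarith
  -- second product inequality: sinh a * sinh (b+y) ≤ sinh b * sinh (a+y)
  have e3 := two_sinh_mul_sinh a (b + y)
  have e4 := two_sinh_mul_sinh b (a + y)
  have key2 : Real.sinh a * Real.sinh (b + y) ≤ Real.sinh b * Real.sinh (a + y) := by
    have ha' : a + (b + y) = b + (a + y) := by ring
    have ha'' : Real.cosh (a - (b + y)) = Real.cosh (b + y - a) := by
      rw [← Real.cosh_neg]; ring_nf
    have hb'' : Real.cosh (b - (a + y)) = Real.cosh (a + y - b) := by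
      rw [← Real.cosh_neg]; ring_nf
    rw [ha'', ha'] at e3
    rw [hb''] at e4
    linarith
  -- nonnegativity facts
  have sa : 0 ≤ Real.sinh a := Real.sinh_nonneg_iff.mpr ha0
  have sb : 0 ≤ Real.sinh b := Real.sinh_nonneg_iff.mpr hb0
  have sya : 0 < Real.sinh (y - a) := Real.sinh_pos_iff.mpr (by linarith)
  have syb : 0 < Real.sinh (y - b) := Real.sinh_pos_iff.mpr (by linarith)
  have say : 0 < Real.sinh (a + y) := Real.sinh_pos_iff.mpr (by linarith)
  have sby : 0 < Real.sinh (b + y) := Real.sinh_pos_iff.mpr (by linarith)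
  have eay : Real.sinh (a - y) = -Real.sinh (y - a) := by
    rw [← Real.sinh_neg]; ring_nf
  have eby : Real.sinh (b - y) = -Real.sinh (y - b) := by
    rw [← Real.sinh_neg]; ring_nf
  have d1 : (0:ℝ) < Real.sinh (a - y) ^ 2 := by rw [eay, neg_sq]; positivity
  have d2 : (0:ℝ) < Real.sinh (b - y) ^ 2 := by rw [eby, neg_sq]; positivity
  have t1 : Real.sinh a ^ 2 / Real.sinh (a - y) ^ 2
      ≤ Real.sinh b ^ 2 / Real.sinh (b - y) ^ 2 := by
    rw [div_le_div_iff₀ d1 d2, eay, eby]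
    simp only [neg_sq]
    have h := pow_le_pow_left₀ (mul_nonneg sa syb.le) key1 2
    rw [mul_pow, mul_pow] at h
    linarith
  have t2 : Real.sinh a ^ 2 / Real.sinh (a + y) ^ 2
      ≤ Real.sinh b ^ 2 / Real.sinh (b + y) ^ 2 := by
    rw [div_le_div_iff₀ (by positivity) (by positivity)]
    have h := pow_le_pow_left₀ (mul_nonneg sa sby.le) key2 2
    rw [mul_pow, mul_pow] at h
    linarith
  linarith
end

section
/- Fix r > 0, and for a complex number z with 0 < |z| < min(2π, 2r) and N ∈ ℕ set G_N(z) = z/(2r) − (π/(2r))·∑_{k=−N}^{N} coth( π(z + 2πk)/(2r) ). Then for each such z the limit G(z) = lim_{N→∞} G_N(z) exists, and lim_{z→0, z≠0} ( G(z) + 1/z ) / z = 1/(2r) − π²/(12r²) + (π²/(2r²))·∑_{k=1}^∞ sinh(kπ²/r)^{-2}. -/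
/-!
Put `a = π / (2r)` and `c = π² / r`, so that `G(z) = z / (2r) - a L(a z)` with
`L(w) = coth w + ∑_{k ≥ 1} (coth (w + k c) + coth (w - k c))`.
Since `‖coth u - 1‖ ≤ 1 / sinh (Re u)` for `Re u > 0`, the `k`-th pair is `O(e^{-k c})` while
`|Re w| < c`, which gives convergence of the symmetric partial sums.
Near `0`, `(coth w - 1/w) / w → 1/3` by the power series of `w cosh w - sinh w`. Each pair
vanishes at `0`, and the mean value inequality bounds its difference quotient on the disc
`|w| < c/2` by the summable majorant `2 sinh (c/2 + k c)⁻²`; hence `∑ pair(w) / w` is continuous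
at `0`, with value `∑ pair'(0) = -2 ∑ sinh (k c)⁻²`.
-/

open Real Filter

noncomputable def ccoth (w : ℂ) : ℂ := Complex.cosh w / Complex.sinh w

open scoped Nat Topology

lemma Complex.abs_sinh_re_le_norm_sinh (w : ℂ) : |Real.sinh w.re| ≤ ‖Complex.sinh w‖ := by
  have key : ∀ u : ℂ, Real.sinh u.re ≤ ‖Complex.sinh u‖ := fun u => by
    rw [Complex.sinh, Real.sinh_eq, norm_div, Complex.norm_two]
    gcongr
    simpa [Complex.norm_exp] using norm_sub_norm_le (Complex.exp u) (Complex.exp (-u))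
  rcases abs_cases (Real.sinh w.re) with ⟨h, -⟩ | ⟨h, -⟩
  · rw [h]; exact key w
  · simpa [h, Complex.sinh_neg] using key (-w)

lemma Complex.sinh_le_norm_sinh {x : ℝ} {w : ℂ} (h : x ≤ |w.re|) :
    Real.sinh x ≤ ‖Complex.sinh w‖ :=
  calc Real.sinh x ≤ Real.sinh |w.re| := Real.sinh_le_sinh.2 h
    _ = |Real.sinh w.re| := by rw [Real.abs_sinh]
    _ ≤ _ := abs_sinh_re_le_norm_sinh w

lemma Complex.sinh_ne_zero_of_re_ne_zero {w : ℂ} (h : w.re ≠ 0) : Complex.sinh w ≠ 0 := by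
  refine norm_pos_iff.1 (lt_of_lt_of_le ?_ (abs_sinh_re_le_norm_sinh w))
  simpa using h

lemma Real.sinh_mul_exp_le_sinh_add (c : ℝ) {x : ℝ} (hx : 0 ≤ x) :
    Real.sinh c * Real.exp x ≤ Real.sinh (c + x) := by
  have h : 0 ≤ (Real.cosh c - Real.sinh c) * Real.sinh x := by
    rw [Real.cosh_sub_sinh]; exact mul_nonneg (Real.exp_pos _).le (Real.sinh_nonneg_iff.2 hx)
  rw [Real.sinh_add, ← Real.cosh_add_sinh x]
  linarith

lemma Real.summable_inv_sinh_pow {c d : ℝ} (hc : 0 < c) (hd : 0 < d) {m : ℕ} (hm : m ≠ 0) :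
    Summable fun k : ℕ => (Real.sinh (c + d * k))⁻¹ ^ m := by
  have hsc : 0 < Real.sinh c := Real.sinh_pos_iff.2 hc
  have hq : Real.exp (-d) ^ m < 1 := pow_lt_one₀ (Real.exp_pos _).le (by simpa using hd) hm
  refine Summable.of_nonneg_of_le (fun k => ?_) (fun k => ?_)
    ((summable_geometric_of_lt_one (by positivity) hq).mul_left ((Real.sinh c)⁻¹ ^ m))
  · have : 0 ≤ Real.sinh (c + d * k) := Real.sinh_nonneg_iff.2 (by positivity)
    positivity
  · calc (Real.sinh (c + d * k))⁻¹ ^ m ≤ ((Real.sinh c * Real.exp (d * k))⁻¹) ^ m := by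
          gcongr
          exact Real.sinh_mul_exp_le_sinh_add c (by positivity)
      _ = (Real.sinh c)⁻¹ ^ m * (Real.exp (-d) ^ m) ^ k := by
          rw [mul_inv, mul_pow, ← Real.exp_neg, ← pow_mul, ← Real.exp_nat_mul,
            ← Real.exp_nat_mul]
          congr 2
          push_cast
          ring

lemma Finset.sum_Icc_neg_eq_add_sum_range {M : Type*} [AddCommMonoid M] (f : ℤ → M) (N : ℕ) :
    ∑ k ∈ Icc (-(N : ℤ)) N, f k = f 0 + ∑ k ∈ range N, (f (k + 1) + f (-(k + 1))) := by
  induction N with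
  | zero => simp
  | succ n ih =>
    have hIcc : Icc (-((n + 1 : ℕ) : ℤ)) ((n + 1 : ℕ) : ℤ)
        = insert (-((n : ℤ) + 1)) (insert ((n : ℤ) + 1) (Icc (-(n : ℤ)) n)) := by
      ext x
      simp only [mem_Icc, mem_insert]
      omega
    rw [hIcc, sum_insert (by simp; omega), sum_insert (by simp), ih, sum_range_succ]
    abel

lemma tendsto_const_mul_nhdsNE {G₀ : Type*} [GroupWithZero G₀] [TopologicalSpace G₀]
    [SeparatelyContinuousMul G₀] {a : G₀} (ha : a ≠ 0) :
    Tendsto (a * ·) (𝓝[≠] 0) (𝓝[≠] 0) :=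
  ((Homeomorph.mulLeft₀ a ha).map_punctured_nhds_eq 0).le.trans_eq (by simp)

lemma norm_dslope_le_of_norm_deriv_le {𝕜 E : Type*} [RCLike 𝕜] [NormedAddCommGroup E]
    [NormedSpace 𝕜 E] {f f' : 𝕜 → E} {s : Set 𝕜} {a x : 𝕜} {M : ℝ} (hs : Convex ℝ s)
    (hf : ∀ y ∈ s, HasDerivAt f (f' y) y) (hM : ∀ y ∈ s, ‖f' y‖ ≤ M) (ha : a ∈ s) (hx : x ∈ s) :
    ‖dslope f a x‖ ≤ M := by
  rcases eq_or_ne x a with rfl | hxa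
  · rw [dslope_same, (hf x hx).deriv]
    exact hM x hx
  · rw [dslope_of_ne f hxa, slope_def_module, norm_smul, norm_inv,
      inv_mul_le_iff₀ (norm_pos_iff.2 (sub_ne_zero.2 hxa)), mul_comm]
    exact hs.norm_image_sub_le_of_norm_hasDerivWithin_le
      (fun y hy => (hf y hy).hasDerivWithinAt) hM ha hx

lemma Complex.hasSum_mul_cosh_sub_sinh (w : ℂ) :
    HasSum (fun n : ℕ => w ^ (2 * n + 3) * (((2 * n + 2)! : ℂ)⁻¹ - ((2 * n + 3)! : ℂ)⁻¹))
      (w * Complex.cosh w - Complex.sinh w) := by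
  have h := ((Complex.hasSum_cosh w).mul_left w).sub (Complex.hasSum_sinh w)
  rw [← hasSum_nat_add_iff' 1] at h
  have hterm : ∀ n : ℕ, w * (w ^ (2 * (n + 1)) / ((2 * (n + 1))! : ℂ))
      - w ^ (2 * (n + 1) + 1) / ((2 * (n + 1) + 1)! : ℂ)
      = w ^ (2 * n + 3) * (((2 * n + 2)! : ℂ)⁻¹ - ((2 * n + 3)! : ℂ)⁻¹) := fun n => by
    rw [show 2 * (n + 1) = 2 * n + 2 by ring, show 2 * n + 2 + 1 = 2 * n + 3 by ring]
    ring
  simp only [hterm] at h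
  simpa using h

lemma Complex.tendsto_mul_cosh_sub_sinh_div_pow_three :
    Tendsto (fun w : ℂ => (w * Complex.cosh w - Complex.sinh w) / w ^ 3) (𝓝[≠] 0)
      (𝓝 (1 / 3)) := by
  set coeff : ℕ → ℂ := fun n => ((2 * n + 2)! : ℂ)⁻¹ - ((2 * n + 3)! : ℂ)⁻¹
  set M : ℂ → ℂ := fun w => ∑' n, w ^ (2 * n) * coeff n
  have hfact : Summable fun n : ℕ => ((n ! : ℝ))⁻¹ := by
    simpa using Real.summable_pow_div_factorial 1
  have hM : ContinuousOn M (Metric.ball 0 1) := by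
    have hinj : ∀ j : ℕ, (fun n : ℕ => 2 * n + j).Injective := fun j a b h => by simpa using h
    refine continuousOn_tsum (fun n => by fun_prop)
      ((hfact.comp_injective (hinj 2)).add (hfact.comp_injective (hinj 3))) fun n w hw => ?_
    rw [mem_ball_zero_iff] at hw
    rw [norm_mul, norm_pow, ← one_mul (_ + _)]
    gcongr
    · exact pow_le_one₀ (norm_nonneg w) hw.le
    · exact (norm_sub_le _ _).trans_eq (by simp)
  have hM0 : M 0 = 1 / 3 := by
    simp only [M]
    rw [tsum_eq_single 0 fun n hn => by simp [hn]]
    norm_num [coeff, Nat.factorial]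
  have heq : ∀ w : ℂ, w ≠ 0 → M w = (w * Complex.cosh w - Complex.sinh w) / w ^ 3 := by
    intro w hw
    rw [← (Complex.hasSum_mul_cosh_sub_sinh w).tsum_eq, ← tsum_div_const]
    refine tsum_congr fun n => ?_
    rw [pow_add]
    field_simp
    simp only [coeff, one_div]
  rw [← hM0]
  refine ((hM.continuousAt (Metric.ball_mem_nhds 0 one_pos)).tendsto.mono_left
    nhdsWithin_le_nhds).congr' ?_
  filter_upwards [self_mem_nhdsWithin] with w hw using heq w hw

lemma Complex.tendsto_sinh_div_self :
    Tendsto (fun w : ℂ => Complex.sinh w / w) (𝓝[≠] 0) (𝓝 1) := by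
  have h := hasDerivAt_iff_tendsto_slope_zero.1 (Complex.hasDerivAt_sinh 0)
  simpa [div_eq_inv_mul] using h

lemma ccoth_neg (w : ℂ) : ccoth (-w) = -ccoth w := by
  simp [ccoth, div_neg]

lemma hasDerivAt_ccoth {w : ℂ} (h : Complex.sinh w ≠ 0) :
    HasDerivAt ccoth (-(Complex.sinh w ^ 2)⁻¹) w := by
  refine ((Complex.hasDerivAt_cosh w).div (Complex.hasDerivAt_sinh w) h).congr_deriv ?_
  field_simp
  linear_combination -Complex.cosh_sq_sub_sinh_sq w

lemma norm_ccoth_sub_one_le {w : ℂ} (h : 0 < w.re) :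
    ‖ccoth w - 1‖ ≤ (Real.sinh w.re)⁻¹ := by
  have hs := Complex.sinh_ne_zero_of_re_ne_zero h.ne'
  have hsinh : 0 < Real.sinh w.re := Real.sinh_pos_iff.2 h
  have hexp : ‖Complex.exp (-w)‖ ≤ 1 := by simpa [Complex.norm_exp] using h.le
  have heq : ccoth w - 1 = Complex.exp (-w) / Complex.sinh w := by
    rw [ccoth, ← Complex.cosh_sub_sinh w]
    field_simp
  rw [heq, norm_div, ← one_div]
  gcongr
  exact (le_abs_self _).trans (Complex.abs_sinh_re_le_norm_sinh w)

lemma tendsto_ccoth_sub_inv_div :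
    Tendsto (fun w : ℂ => (ccoth w - 1 / w) / w) (𝓝[≠] 0) (𝓝 (1 / 3)) := by
  have hs := Complex.tendsto_sinh_div_self
  have h := Complex.tendsto_mul_cosh_sub_sinh_div_pow_three.div hs one_ne_zero
  rw [div_one] at h
  refine h.congr' ?_
  filter_upwards [self_mem_nhdsWithin, hs.eventually_ne one_ne_zero] with w (hw : w ≠ 0) hsw
  have hsinh : Complex.sinh w ≠ 0 := fun h0 => hsw (by simp [h0])
  simp only [Pi.div_apply, ccoth]
  field_simp

noncomputable def cothPair (s : ℝ) (w : ℂ) : ℂ := ccoth (w + s) + ccoth (w - s)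

lemma cothPair_zero (s : ℝ) : cothPair s 0 = 0 := by
  simp [cothPair, ccoth_neg]

lemma norm_cothPair_le {s : ℝ} {w : ℂ} (h : |w.re| < s) :
    ‖cothPair s w‖ ≤ 2 * (Real.sinh (s - |w.re|))⁻¹ := by
  have key : ∀ u : ℂ, s - |w.re| ≤ u.re → ‖ccoth u - 1‖ ≤ (Real.sinh (s - |w.re|))⁻¹ :=
    fun u hu => (norm_ccoth_sub_one_le (by linarith)).trans <| by
      have : 0 < Real.sinh (s - |w.re|) := Real.sinh_pos_iff.2 (by linarith)
      gcongr
      exact Real.sinh_le_sinh.2 hu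
  have hpair : cothPair s w = (ccoth (s + w) - 1) - (ccoth (s - w) - 1) := by
    rw [cothPair, ← neg_sub (s : ℂ) w, ccoth_neg, add_comm w]
    ring
  rw [hpair, two_mul]
  refine (norm_sub_le _ _).trans (add_le_add (key _ ?_) (key _ ?_)) <;>
    simp only [Complex.add_re, Complex.sub_re, Complex.ofReal_re] <;>
    linarith [neg_abs_le w.re, le_abs_self w.re]

lemma hasDerivAt_cothPair {s : ℝ} {w : ℂ} (h : |w.re| < s) :
    HasDerivAt (cothPair s) (-(Complex.sinh (w + s) ^ 2)⁻¹ - (Complex.sinh (w - s) ^ 2)⁻¹) w := by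
  have hadd : Complex.sinh (w + s) ≠ 0 := Complex.sinh_ne_zero_of_re_ne_zero <| by
    simp only [Complex.add_re, Complex.ofReal_re]; linarith [neg_abs_le w.re]
  have hsub : Complex.sinh (w - s) ≠ 0 := Complex.sinh_ne_zero_of_re_ne_zero <| by
    simp only [Complex.sub_re, Complex.ofReal_re]; linarith [le_abs_self w.re]
  refine (((hasDerivAt_ccoth hadd).comp w ((hasDerivAt_id w).add_const _)).add
    ((hasDerivAt_ccoth hsub).comp w ((hasDerivAt_id w).sub_const _))).congr_deriv ?_
  ring

lemma norm_deriv_cothPair_le {s x : ℝ} {w : ℂ} (hx : 0 < x) (h : x ≤ s - |w.re|) :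
    ‖-(Complex.sinh (w + s) ^ 2)⁻¹ - (Complex.sinh (w - s) ^ 2)⁻¹‖ ≤ 2 * (Real.sinh x)⁻¹ ^ 2 := by
  have key : ∀ u : ℂ, x ≤ |u.re| → ‖(Complex.sinh u ^ 2)⁻¹‖ ≤ (Real.sinh x)⁻¹ ^ 2 := by
    intro u hu
    have : 0 < Real.sinh x := Real.sinh_pos_iff.2 hx
    rw [norm_inv, norm_pow, inv_pow]
    gcongr
    exact Complex.sinh_le_norm_sinh hu
  rw [two_mul, sub_eq_add_neg, ← neg_add, norm_neg]
  refine (norm_add_le _ _).trans (add_le_add (key _ ?_) (key _ ?_)) <;>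
    simp only [Complex.add_re, Complex.sub_re, Complex.ofReal_re] <;>
    [rw [le_abs]; rw [abs_sub_comm, le_abs]] <;>
    left <;> linarith [neg_abs_le w.re, le_abs_self w.re]

noncomputable def cothLattice (c : ℝ) (w : ℂ) : ℂ := ccoth w + ∑' k : ℕ, cothPair ((k + 1) * c) w

lemma summable_cothPair {c : ℝ} {w : ℂ} (h : |w.re| < c) :
    Summable fun k : ℕ => cothPair ((k + 1) * c) w := by
  have hc : 0 < c := (abs_nonneg _).trans_lt h
  refine .of_norm_bounded ((Real.summable_inv_sinh_pow (sub_pos.2 h) hc one_ne_zero).mul_left 2)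
    fun k => ?_
  have hk : |w.re| < (k + 1) * c := h.trans_le (le_mul_of_one_le_left hc.le (by simp))
  convert norm_cothPair_le hk using 4
  rw [pow_one]
  congr 2
  ring

theorem tendsto_sum_Icc_ccoth {c : ℝ} {w : ℂ} (h : |w.re| < c) :
    Tendsto (fun N : ℕ => ∑ k ∈ Finset.Icc (-(N : ℤ)) N, ccoth (w + k * c)) atTop
      (𝓝 (cothLattice c w)) := by
  simp_rw [Finset.sum_Icc_neg_eq_add_sum_range]
  convert ((summable_cothPair h).hasSum.tendsto_sum_nat).const_add (ccoth w) using 3 with N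
  · simp
  · refine Finset.sum_congr rfl fun k _ => ?_
    simp only [cothPair]
    push_cast
    ring_nf
  · rfl

lemma continuousAt_tsum_dslope_cothPair {c : ℝ} (hc : 0 < c) :
    ContinuousAt (fun w => ∑' k : ℕ, dslope (cothPair ((k + 1) * c)) 0 w) 0 := by
  set B := Metric.ball (0 : ℂ) (c / 2)
  have hB : ∀ k : ℕ, ∀ y ∈ B, |y.re| < (k + 1) * c := fun k y hy => by
    rw [mem_ball_zero_iff] at hy
    have : c ≤ (k + 1) * c := le_mul_of_one_le_left hc.le (by simp)
    linarith [Complex.abs_re_le_norm y]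
  have hBnhds : B ∈ 𝓝 0 := Metric.ball_mem_nhds 0 (half_pos hc)
  refine ContinuousOn.continuousAt (s := B) ?_ hBnhds
  refine continuousOn_tsum (fun k => ?_)
    ((Real.summable_inv_sinh_pow (half_pos hc) hc two_ne_zero).mul_left 2) fun k y hy => ?_
  · refine (continuousOn_dslope hBnhds).2 ⟨fun y hy => ?_, ?_⟩
    · exact (hasDerivAt_cothPair (hB k y hy)).continuousAt.continuousWithinAt
    · exact (hasDerivAt_cothPair (hB k 0 (mem_of_mem_nhds hBnhds))).differentiableAt
  · refine norm_dslope_le_of_norm_deriv_le (convex_ball 0 _)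
      (fun y hy => hasDerivAt_cothPair (hB k y hy)) (fun y hy => ?_) (mem_of_mem_nhds hBnhds) hy
    refine norm_deriv_cothPair_le (by positivity) ?_
    rw [mem_ball_zero_iff] at hy
    linarith [Complex.abs_re_le_norm y]

theorem tendsto_cothLattice_sub_inv_div {c : ℝ} (hc : 0 < c) :
    Tendsto (fun w => (cothLattice c w - 1 / w) / w) (𝓝[≠] 0)
      (𝓝 ((1 / 3 - 2 * ∑' k : ℕ, (Real.sinh ((k + 1) * c) ^ 2)⁻¹ : ℝ) : ℂ)) := by
  have hs : ∀ k : ℕ, |(0 : ℂ).re| < (k + 1) * c := fun k => by simp; positivity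
  have hQ0 : ∑' k : ℕ, dslope (cothPair ((k + 1) * c)) 0 0
      = -2 * ∑' k : ℕ, ((Real.sinh ((k + 1) * c) ^ 2)⁻¹ : ℝ) := by
    rw [Complex.ofReal_tsum, ← tsum_mul_left]
    refine tsum_congr fun k => ?_
    rw [dslope_same, (hasDerivAt_cothPair (hs k)).deriv]
    push_cast
    rw [zero_sub, Complex.sinh_neg, zero_add]
    ring
  have hQ := (continuousAt_tsum_dslope_cothPair hc).tendsto.mono_left
    (nhdsWithin_le_nhds (s := {0}ᶜ))
  rw [hQ0] at hQ
  rw [show ((1 / 3 - 2 * ∑' k : ℕ, (Real.sinh ((k + 1) * c) ^ 2)⁻¹ : ℝ) : ℂ)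
      = 1 / 3 + -2 * ∑' k : ℕ, ((Real.sinh ((k + 1) * c) ^ 2)⁻¹ : ℝ) by push_cast; ring]
  refine (tendsto_ccoth_sub_inv_div.add hQ).congr' ?_
  filter_upwards [self_mem_nhdsWithin] with w (hw : w ≠ 0)
  simp only [dslope_of_ne _ hw, slope_def_field, cothPair_zero, sub_zero, tsum_div_const,
    cothLattice]
  ring

lemma tendsto_scaled_cothLattice_add_inv_div {c : ℝ} (hc : 0 < c) {a : ℂ} (ha : a ≠ 0) (b : ℂ) :
    Tendsto (fun z => (z * b - a * cothLattice c (a * z) + 1 / z) / z) (𝓝[≠] 0)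
      (𝓝 (b - a ^ 2 * ((1 / 3 - 2 * ∑' k : ℕ, (Real.sinh ((k + 1) * c) ^ 2)⁻¹ : ℝ) : ℂ))) := by
  refine ((((tendsto_cothLattice_sub_inv_div hc).comp
    (tendsto_const_mul_nhdsNE ha)).const_mul (a ^ 2)).const_sub b).congr' ?_
  filter_upwards [self_mem_nhdsWithin] with z (hz : z ≠ 0)
  simp only [Function.comp_apply]
  field_simp
  ring

/-- Fix `r > 0` and for `0 < |z| < min(2π, 2r)` set
`G_N(z) = z/(2r) - (π/(2r)) ∑_{k=-N}^N coth(π(z+2πk)/(2r))`.  Then `G(z) = lim G_N(z)`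
exists, and `(G(z) + 1/z)/z → 1/(2r) - π²/(12r²) + (π²/(2r²)) ∑_{k≥1} sinh(kπ²/r)⁻²`
as `z → 0`, `z ≠ 0`. -/
theorem stmt16 (r : ℝ) (hr : 0 < r) :
    ∃ G : ℂ → ℂ,
      (∀ z : ℂ, 0 < ‖z‖ → ‖z‖ < min (2 * π) (2 * r) →
        Tendsto (fun N : ℕ =>
            z / (2 * (r : ℂ)) - ((π : ℂ) / (2 * (r : ℂ))) *
              ∑ k ∈ Finset.Icc (-(N : ℤ)) (N : ℤ),
                ccoth ((π : ℂ) * (z + 2 * (π : ℂ) * (k : ℂ)) / (2 * (r : ℂ))))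
          atTop (nhds (G z))) ∧
      Tendsto (fun z : ℂ => (G z + 1 / z) / z) (nhdsWithin 0 {0}ᶜ)
        (nhds ((1 / (2 * r) - π ^ 2 / (12 * r ^ 2)
          + (π ^ 2 / (2 * r ^ 2)) *
            ∑' k : ℕ, ((Real.sinh (((k : ℝ) + 1) * π ^ 2 / r)) ^ 2)⁻¹ : ℝ) : ℂ)) := by
  set a : ℂ := (π : ℂ) / (2 * r)
  have hr' : (r : ℂ) ≠ 0 := by exact_mod_cast hr.ne'
  have ha : a ≠ 0 := by simp [a, pi_ne_zero, hr']
  refine ⟨fun z => z * (1 / (2 * r)) - a * cothLattice (π ^ 2 / r) (a * z), fun z _ hz => ?_,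
    ?_⟩
  · have hre : |(a * z).re| < π ^ 2 / r := calc
      |(a * z).re| ≤ ‖a‖ * ‖z‖ := (Complex.abs_re_le_norm _).trans (norm_mul_le _ _)
      _ < π / (2 * r) * (2 * π) := by
        rw [show ‖a‖ = π / (2 * r) by simp [a, abs_of_pos hr, abs_of_pos pi_pos]]
        gcongr
        exact hz.trans_le (min_le_left _ _)
      _ = π ^ 2 / r := by field_simp
    refine (((tendsto_sum_Icc_ccoth hre).const_mul a).const_sub _).congr fun N => ?_
    simp only [a]
    push_cast
    ring_nf
  · convert tendsto_scaled_cothLattice_add_inv_div (c := π ^ 2 / r) (by positivity) ha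
      (1 / (2 * r)) using 2
    simp_rw [mul_div_assoc]
    generalize ∑' k : ℕ, (Real.sinh ((k + 1) * (π ^ 2 / r)) ^ 2)⁻¹ = S
    simp only [a]
    push_cast
    field_simp
    ring
end
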